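/- (Lyapunov decrease.) Under the hypotheses of the main analysis result—an algorithm of the form (alg) whose gradient maps satisfy the sector bound with parameters (m, L) and optimizer y_opt, Laplacians satisfying the graph assumptions with parameter σ, a fixed point satisfying the fixed-point conditions (consensus, optimality, robustness) with y*ᵢ = y_opt, and matrices P ≻ 0, Q ≻ 0, R ⪰ 0 satisfying the two LMIs (LMI-1) and (LMI-2) with rate parameter ρ ≥ 0—the Lyapunov function V^k := (x̃^k)ᵀ (Π ⊗ P + (I−Π) ⊗ Q) x̃^k satisfies V^{k+1} ≤ ρ²·V^k for every k ≥ 0, where x̃^k stacks the state errors x_i^k − x*ᵢ and Π := (1/n)·1_n 1_nᵀ. -/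

import Mathlib

open Matrix BigOperators Kronecker

/-- The Euclidean norm of a vector. -/
noncomputable def enorm2 {ι : Type*} [Fintype ι] (v : ι → ℝ) : ℝ :=
  Real.sqrt (∑ i, v i ^ 2)

/-- The projection matrix `Π = (1/n) 1ₙ 1ₙᵀ` onto the span of the all-ones vector. -/
noncomputable def projOnes (n : ℕ) : Matrix (Fin n) (Fin n) ℝ :=
  Matrix.of fun _ _ => (n : ℝ)⁻¹

/-- The quadratic form `[y; u]ᵀ M₀ [y; u]` with `M₀ = [[−2mL, L+m],[L+m, −2]]`. -/
def quadM0 (m L y u : ℝ) : ℝ := -(2*m*L) * y^2 + 2*(L+m) * y * u - 2 * u^2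

/-! Split the error `xᵢᵏ - xᵢ*` of every agent into its mean over the agents and its deviation
from that mean (`Fintype.balance`). Since the Laplacians have zero row and column sums, the mean
error evolves as if there were no communication and satisfies the coupling constraint, so
(LMI-1) applies to it; each deviation satisfies (LMI-2). The Lyapunov function and the sector
supply `∑ᵢ [ỹᵢ; ũᵢ]ᵀ M₀ [ỹᵢ; ũᵢ]` both split as `n ×` (mean part) `+ ∑ᵢ` (deviation parts),
because the deviations sum to zero. Adding the LMIs, the sector supply is nonnegative by the
sector bound and the graph supply is nonnegative because `I - Π - Lᵏ` contracts the deviations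
of `z` by `σ`, which leaves `V^{k+1} ≤ ρ² V^k`. -/

open Finset Fintype

section Mean
variable {ι G H M : Type*} [Fintype ι] [AddCommGroup G] [Module ℚ≥0 G]
  [AddCommGroup H] [Module ℚ≥0 H] [AddCommGroup M]

-- Mathlib's `map_expect` asks for `ℚ≥0`-linearity; additivity already implies it.
lemma map_expect_of_addMonoidHomClass {F : Type*} [FunLike F G H] [AddMonoidHomClass F G H]
    (g : F) (w : ι → G) : g (𝔼 i, w i) = 𝔼 i, g (w i) := by
  simp only [Finset.expect, map_nnrat_smul, map_sum]

lemma mulVec_expect {m k : Type*} [Fintype k] (A : Matrix m k ℝ) (w : ι → k → ℝ) :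
    A *ᵥ 𝔼 i, w i = 𝔼 i, A *ᵥ w i :=
  map_expect_of_addMonoidHomClass A.mulVecLin w

lemma dotProduct_expect {k : Type*} [Fintype k] (a : k → ℝ) (w : ι → k → ℝ) :
    a ⬝ᵥ 𝔼 i, w i = 𝔼 i, a ⬝ᵥ w i :=
  map_expect_of_addMonoidHomClass (dotProductBilin ℝ ℝ a) w

lemma expect_smul {E : Type*} [AddCommGroup E] [Module ℝ E] [Module ℚ≥0 E]
    (a : ι → ℝ) (b : E) : (𝔼 i, a i) • b = 𝔼 i, a i • b :=
  map_expect_of_addMonoidHomClass (LinearMap.smulRight LinearMap.id b : ℝ →ₗ[ℝ] E) a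

lemma sum_bilin_eq_card_smul_add_sum_balance {R : Type*} [CommSemiring R] [Module R G]
    [Module R M] (B : G →ₗ[R] G →ₗ[R] M) (w w' : ι → G) :
    ∑ i, B (w i) (w' i) = card ι • B (𝔼 i, w i) (𝔼 i, w' i)
      + ∑ i, B (balance w i) (balance w' i) := by
  have hmean_add : ∀ (f : ι → G) i, f i = 𝔼 j, f j + balance f i := fun f i => by
    rw [balance_apply, add_sub_cancel]
  conv_lhs => enter [2, i]; rw [hmean_add w i, hmean_add w' i]
  simp only [map_add, LinearMap.add_apply, sum_add_distrib, ← map_sum, ← LinearMap.sum_apply,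
    sum_balance, map_zero, LinearMap.zero_apply, sum_const, card_univ, map_nsmul]
  abel

lemma sum_sum_bilin_eq_card_mul_card_smul {R : Type*} [CommSemiring R] [Module R G]
    [Module R M] (B : G →ₗ[R] G →ₗ[R] M) (w : ι → G) :
    ∑ i, ∑ j, B (w i) (w j) = (card ι * card ι) • B (𝔼 i, w i) (𝔼 i, w i) := by
  calc ∑ i, ∑ j, B (w i) (w j) = B (∑ i, w i) (∑ j, w j) := by
        simp only [map_sum, LinearMap.sum_apply]
        exact sum_comm
    _ = _ := by
        rw [← Fintype.card_smul_expect w, map_nsmul, map_nsmul, LinearMap.smul_apply, smul_smul]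

end Mean

lemma dotProduct_kronecker_mulVec {ι κ R : Type*} [Fintype ι] [Fintype κ] [CommSemiring R]
    (M : Matrix ι ι R) (P : Matrix κ κ R) (w w' : ι → κ → R) :
    (fun p : ι × κ => w p.1 p.2) ⬝ᵥ (M ⊗ₖ P) *ᵥ (fun p => w' p.1 p.2)
      = ∑ i, ∑ j, M i j * (w i ⬝ᵥ P *ᵥ w' j) := by
  simp only [dotProduct, mulVec, kroneckerMap_apply, Fintype.sum_prod_type, mul_sum]
  refine sum_congr rfl fun i _ => ?_
  rw [sum_comm]
  refine sum_congr rfl fun j _ => sum_congr rfl fun a _ => sum_congr rfl fun b _ => ?_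
  ring

lemma lyapunov_eq_mean_add_balance {n ν : ℕ} (P Q : Matrix (Fin ν) (Fin ν) ℝ)
    (w : Fin n → Fin ν → ℝ) :
    (fun p : Fin n × Fin ν => w p.1 p.2) ⬝ᵥ
        (projOnes n ⊗ₖ P + (1 - projOnes n) ⊗ₖ Q) *ᵥ (fun p => w p.1 p.2)
      = n * ((𝔼 i, w i) ⬝ᵥ P *ᵥ 𝔼 i, w i) + ∑ i, balance w i ⬝ᵥ Q *ᵥ balance w i := by
  have hsplit := sum_bilin_eq_card_smul_add_sum_balance (Matrix.toLinearMap₂' ℝ Q) w w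
  simp only [Matrix.toLinearMap₂'_apply'] at hsplit
  rw [add_mulVec, dotProduct_add, dotProduct_kronecker_mulVec, dotProduct_kronecker_mulVec]
  simp only [projOnes, of_apply, Matrix.sub_apply, one_apply, sub_mul, ite_mul, one_mul,
    zero_mul, sum_sub_distrib, Finset.sum_ite_eq, mem_univ, if_true, ← mul_sum]
  have hsq := fun B : Matrix (Fin ν) (Fin ν) ℝ =>
    sum_sum_bilin_eq_card_mul_card_smul (Matrix.toLinearMap₂' ℝ B) w
  simp only [Matrix.toLinearMap₂'_apply', Fintype.card_fin, nsmul_eq_mul, Nat.cast_mul]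
    at hsq hsplit
  rw [hsq, hsq, hsplit]
  rcases eq_or_ne (n : ℝ) 0 with hn | hn
  · simp [hn]
  · field_simp
    ring

lemma enorm2_sq {ι : Type*} [Fintype ι] (v : ι → ℝ) : enorm2 v ^ 2 = ∑ i, v i ^ 2 :=
  Real.sq_sqrt (sum_nonneg fun _ _ => sq_nonneg _)

lemma sum_sq_mulVec_le {ι : Type*} [Fintype ι] {M : Matrix ι ι ℝ} {σ : ℝ}
    (hM : ∀ φ, enorm2 (M *ᵥ φ) ≤ σ * enorm2 φ) (φ : ι → ℝ) :
    ∑ i, (M *ᵥ φ) i ^ 2 ≤ σ ^ 2 * ∑ i, φ i ^ 2 := by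
  rw [← enorm2_sq, ← enorm2_sq, ← mul_pow]
  exact pow_le_pow_left₀ (Real.sqrt_nonneg _) (hM φ) 2

lemma dotProduct_transpose_mul_self_mulVec {κ : Type*} [Fintype κ] (B : Matrix κ κ ℝ)
    (x : κ → ℝ) : x ⬝ᵥ (Bᵀ * B) *ᵥ x = ∑ l, (B *ᵥ x) l ^ 2 := by
  rw [← mulVec_mulVec, dotProduct_mulVec, vecMul_transpose]
  simp only [dotProduct, sq]

open scoped MatrixOrder Matrix.Norms.L2Operator in
lemma sum_quadForm_le_of_contraction {ι κ : Type*} [Fintype ι] [Fintype κ] [DecidableEq κ]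
    {M : Matrix ι ι ℝ} {σ : ℝ} (hM : ∀ φ, enorm2 (M *ᵥ φ) ≤ σ * enorm2 φ)
    {R : Matrix κ κ ℝ} (hR : R.PosSemidef) (w : ι → κ → ℝ) :
    ∑ i, (∑ j, M i j • w j) ⬝ᵥ R *ᵥ (∑ j, M i j • w j) ≤ σ ^ 2 * ∑ i, w i ⬝ᵥ R *ᵥ w i := by
  -- Writing `R = Bᵀ B`, each coordinate of `B wᵢ` is contracted by `M` separately.
  obtain ⟨B, rfl⟩ := CStarAlgebra.nonneg_iff_eq_star_mul_self.mp hR.nonneg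
  have hB : star B = Bᵀ := conjTranspose_eq_transpose_of_trivial B
  have hcoord : ∀ i l, (B *ᵥ ∑ j, M i j • w j) l = (M *ᵥ fun j => (B *ᵥ w j) l) i := by
    intro i l
    simp only [mulVec, dotProduct, Finset.sum_apply, Pi.smul_apply, smul_eq_mul, mul_sum]
    rw [sum_comm]
    exact sum_congr rfl fun _ _ => sum_congr rfl fun _ _ => by ring
  simp only [hB, dotProduct_transpose_mul_self_mulVec, hcoord]
  rw [sum_comm, sum_comm (f := fun i l => (B *ᵥ w i) l ^ 2), mul_sum]
  exact sum_le_sum fun l _ => sum_sq_mulVec_le hM _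

lemma quadM0_eq_neg_two_mul (m L y u : ℝ) :
    quadM0 m L y u = -2 * ((u - m * y) * (u - L * y)) := by
  unfold quadM0
  ring

lemma sum_quadM0_eq_mean_add_balance {ι : Type*} [Fintype ι] (m L : ℝ) (y u : ι → ℝ) :
    ∑ i, quadM0 m L (y i) (u i)
      = card ι * quadM0 m L (𝔼 i, y i) (𝔼 i, u i)
        + ∑ i, quadM0 m L (balance y i) (balance u i) := by
  have h := sum_bilin_eq_card_smul_add_sum_balance (ι := ι) (LinearMap.mul ℝ ℝ)
  simp only [LinearMap.mul_apply', nsmul_eq_mul] at h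
  have hq : ∀ a b,
      quadM0 m L a b = -(2 * m * L) * (a * a) + 2 * (L + m) * (a * b) - 2 * (b * b) :=
    fun a b => by unfold quadM0; ring
  simp only [hq, sum_add_distrib, sum_sub_distrib, ← mul_sum, h y y, h y u, h u u]
  ring

section Laplacian
variable {ι E : Type*} [Fintype ι] [AddCommGroup E] [Module ℝ E] {Lap : Matrix ι ι ℝ}

lemma sum_smul_sub_const_of_mulVec_one (hLap : Lap *ᵥ (fun _ => 1) = 0) (w : ι → E) (a : E)
    (i : ι) : ∑ j, Lap i j • (w j - a) = ∑ j, Lap i j • w j := by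
  have hrow : ∑ j, Lap i j = 0 := by simpa [mulVec, dotProduct] using congrFun hLap i
  simp only [smul_sub, sum_sub_distrib, ← sum_smul, hrow, zero_smul, sub_zero]

lemma sum_sum_smul_of_vecMul_one (hLap : (fun _ => 1) ᵥ* Lap = 0) (w : ι → E) :
    ∑ i, ∑ j, Lap i j • w j = 0 := by
  have hcol : ∀ j, ∑ i, Lap i j = 0 := fun j => by
    simpa [vecMul, dotProduct] using congrFun hLap j
  rw [sum_comm]
  simp only [← sum_smul, hcol, zero_smul, sum_const_zero]

end Laplacian

lemma sum_one_sub_projOnes_sub_smul {n : ℕ} {E : Type*} [AddCommGroup E] [Module ℝ E]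
    (Lap : Matrix (Fin n) (Fin n) ℝ) {w : Fin n → E} (hw : ∑ j, w j = 0) (i : Fin n) :
    ∑ j, (1 - projOnes n - Lap) i j • w j = w i - ∑ j, Lap i j • w j := by
  simp only [Matrix.sub_apply, sub_smul, sum_sub_distrib, one_apply, ite_smul, one_smul,
    zero_smul, Finset.sum_ite_eq, mem_univ, if_true, projOnes, of_apply, ← smul_sum, hw,
    smul_zero, sub_zero]

lemma sum_balance_sub_quadForm_le {n c : ℕ} {σ : ℝ} {Lap : Matrix (Fin n) (Fin n) ℝ}
    {ez ev : Fin n → Fin c → ℝ} {R : Matrix (Fin c) (Fin c) ℝ} (hR : R.PosSemidef)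
    (hrow : Lap *ᵥ (fun _ => 1) = 0)
    (hσ : ∀ φ, enorm2 ((1 - projOnes n - Lap) *ᵥ φ) ≤ σ * enorm2 φ)
    (hv : ∀ i, ev i = ∑ j, Lap i j • ez j) :
    ∑ i, (balance ez i - ev i) ⬝ᵥ R *ᵥ (balance ez i - ev i)
      ≤ σ ^ 2 * ∑ i, balance ez i ⬝ᵥ R *ᵥ balance ez i := by
  have hv' : ∀ i, ev i = ∑ j, Lap i j • balance ez j := fun i => by
    simp only [balance_apply, sum_smul_sub_const_of_mulVec_one hrow, hv]
  have hdev : ∀ i, balance ez i - ev i = ∑ j, (1 - projOnes n - Lap) i j • balance ez j :=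
    fun i => by rw [sum_one_sub_projOnes_sub_smul Lap (sum_balance ez), hv']
  simp only [hdev]
  exact sum_quadForm_le_of_contraction hσ hR _

lemma expect_eq_zero_of_vecMul_one {ι E : Type*} [Fintype ι] [AddCommGroup E] [Module ℝ E]
    [Module ℚ≥0 E] {Lap : Matrix ι ι ℝ} {ez ev : ι → E} (hcol : (fun _ => 1) ᵥ* Lap = 0)
    (hv : ∀ i, ev i = ∑ j, Lap i j • ez j) : 𝔼 i, ev i = 0 := by
  simp only [hv, Finset.expect, sum_sum_smul_of_vecMul_one hcol, smul_zero]

lemma Matrix.IsSymm.dotProduct_mulVec_comm {κ : Type*} [Fintype κ] {R : Matrix κ κ ℝ}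
    (hR : R.IsSymm) (a b : κ → ℝ) : a ⬝ᵥ R *ᵥ b = b ⬝ᵥ R *ᵥ a := by
  rw [dotProduct_mulVec, ← mulVec_transpose, hR.eq, dotProduct_comm]

section ErrorSystem
variable {n ν c r : ℕ} {A : Matrix (Fin ν) (Fin ν) ℝ} {Bu : Fin ν → ℝ}
  {Bv : Matrix (Fin ν) (Fin c) ℝ} {Cy : Fin ν → ℝ} {Dyu : ℝ} {Dyv : Fin c → ℝ}
  {Cz : Matrix (Fin c) (Fin ν) ℝ} {Dzu : Fin c → ℝ} {Dzv : Matrix (Fin c) (Fin c) ℝ}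
  {Fx : Matrix (Fin r) (Fin ν) ℝ} {Fu : Fin r → ℝ} {m L σ ρ : ℝ}
  {e e' : Fin n → Fin ν → ℝ} {ey eu : Fin n → ℝ} {ez ev : Fin n → Fin c → ℝ}

lemma lmi1_at_mean {P : Matrix (Fin ν) (Fin ν) ℝ}
    (hLMI1 : ∀ (xv : Fin ν → ℝ) (uv : ℝ), Fx *ᵥ xv + uv • Fu = 0 →
      (A *ᵥ xv + uv • Bu) ⬝ᵥ P *ᵥ (A *ᵥ xv + uv • Bu) - ρ ^ 2 * (xv ⬝ᵥ P *ᵥ xv)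
        + quadM0 m L (Cy ⬝ᵥ xv + Dyu * uv) uv ≤ 0)
    (hx : ∀ i, e' i = A *ᵥ e i + eu i • Bu + Bv *ᵥ ev i)
    (hy : ∀ i, ey i = Cy ⬝ᵥ e i + Dyu * eu i + Dyv ⬝ᵥ ev i)
    (hF : ∑ i, (Fx *ᵥ e i + eu i • Fu) = 0) (hv : 𝔼 i, ev i = 0) :
    (𝔼 i, e' i) ⬝ᵥ P *ᵥ (𝔼 i, e' i) - ρ ^ 2 * ((𝔼 i, e i) ⬝ᵥ P *ᵥ 𝔼 i, e i)
      + quadM0 m L (𝔼 i, ey i) (𝔼 i, eu i) ≤ 0 := by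
  have hx' : 𝔼 i, e' i = A *ᵥ (𝔼 i, e i) + (𝔼 i, eu i) • Bu := by
    simp only [hx, expect_add_distrib, ← mulVec_expect, ← expect_smul, hv, mulVec_zero,
      add_zero]
  have hy' : 𝔼 i, ey i = Cy ⬝ᵥ (𝔼 i, e i) + Dyu * 𝔼 i, eu i := by
    simp only [hy, expect_add_distrib, ← dotProduct_expect, ← mul_expect, hv, dotProduct_zero,
      add_zero]
  have hF' : Fx *ᵥ (𝔼 i, e i) + (𝔼 i, eu i) • Fu = 0 := by
    rw [mulVec_expect, expect_smul, ← expect_add_distrib, Finset.expect, hF, smul_zero]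
  rw [hx', hy']
  exact hLMI1 _ _ hF'

lemma lmi2_at_balance {Q : Matrix (Fin ν) (Fin ν) ℝ} {R : Matrix (Fin c) (Fin c) ℝ}
    (hR : R.IsSymm)
    (hLMI2 : ∀ (xv : Fin ν → ℝ) (uv : ℝ) (vv : Fin c → ℝ),
      (A *ᵥ xv + uv • Bu + Bv *ᵥ vv) ⬝ᵥ Q *ᵥ (A *ᵥ xv + uv • Bu + Bv *ᵥ vv)
        - ρ ^ 2 * (xv ⬝ᵥ Q *ᵥ xv)
        + quadM0 m L (Cy ⬝ᵥ xv + Dyu * uv + Dyv ⬝ᵥ vv) uv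
        + (σ ^ 2 - 1) * ((Cz *ᵥ xv + uv • Dzu + Dzv *ᵥ vv) ⬝ᵥ
            R *ᵥ (Cz *ᵥ xv + uv • Dzu + Dzv *ᵥ vv))
        + 2 * ((Cz *ᵥ xv + uv • Dzu + Dzv *ᵥ vv) ⬝ᵥ R *ᵥ vv)
        - vv ⬝ᵥ R *ᵥ vv ≤ 0)
    (hx : ∀ i, e' i = A *ᵥ e i + eu i • Bu + Bv *ᵥ ev i)
    (hy : ∀ i, ey i = Cy ⬝ᵥ e i + Dyu * eu i + Dyv ⬝ᵥ ev i)
    (hz : ∀ i, ez i = Cz *ᵥ e i + eu i • Dzu + Dzv *ᵥ ev i) (hv : 𝔼 i, ev i = 0)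
    (i : Fin n) :
    balance e' i ⬝ᵥ Q *ᵥ balance e' i - ρ ^ 2 * (balance e i ⬝ᵥ Q *ᵥ balance e i)
      + quadM0 m L (balance ey i) (balance eu i)
      + (σ ^ 2 * (balance ez i ⬝ᵥ R *ᵥ balance ez i)
        - (balance ez i - ev i) ⬝ᵥ R *ᵥ (balance ez i - ev i)) ≤ 0 := by
  have hx' : balance e' i = A *ᵥ balance e i + balance eu i • Bu + Bv *ᵥ ev i := by
    simp only [balance_apply, hx, expect_add_distrib, ← mulVec_expect, ← expect_smul, hv,
      mulVec_zero, mulVec_sub, sub_smul]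
    abel
  have hy' : balance ey i = Cy ⬝ᵥ balance e i + Dyu * balance eu i + Dyv ⬝ᵥ ev i := by
    simp only [balance_apply, hy, expect_add_distrib, ← dotProduct_expect, ← mul_expect, hv,
      dotProduct_zero, dotProduct_sub, mul_sub]
    ring
  have hz' : balance ez i = Cz *ᵥ balance e i + balance eu i • Dzu + Dzv *ᵥ ev i := by
    simp only [balance_apply, hz, expect_add_distrib, ← mulVec_expect, ← expect_smul, hv,
      mulVec_zero, mulVec_sub, sub_smul]
    abel
  have h := hLMI2 (balance e i) (balance eu i) (ev i)
  rw [← hx', ← hy', ← hz'] at h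
  have hexpand : (balance ez i - ev i) ⬝ᵥ R *ᵥ (balance ez i - ev i)
      = balance ez i ⬝ᵥ R *ᵥ balance ez i - 2 * (balance ez i ⬝ᵥ R *ᵥ ev i)
        + ev i ⬝ᵥ R *ᵥ ev i := by
    rw [sub_dotProduct, mulVec_sub, dotProduct_sub, dotProduct_sub,
      hR.dotProduct_mulVec_comm (ev i)]
    ring
  linarith

lemma lyapunov_decrease_of_error_system {P Q : Matrix (Fin ν) (Fin ν) ℝ}
    {R : Matrix (Fin c) (Fin c) ℝ} (hR : R.PosSemidef)
    (hrow : Lap *ᵥ (fun _ => 1) = 0) (hcol : (fun _ => 1) ᵥ* Lap = 0)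
    (hσ : ∀ φ, enorm2 ((1 - projOnes n - Lap) *ᵥ φ) ≤ σ * enorm2 φ)
    (hLMI1 : ∀ (xv : Fin ν → ℝ) (uv : ℝ), Fx *ᵥ xv + uv • Fu = 0 →
      (A *ᵥ xv + uv • Bu) ⬝ᵥ P *ᵥ (A *ᵥ xv + uv • Bu) - ρ ^ 2 * (xv ⬝ᵥ P *ᵥ xv)
        + quadM0 m L (Cy ⬝ᵥ xv + Dyu * uv) uv ≤ 0)
    (hLMI2 : ∀ (xv : Fin ν → ℝ) (uv : ℝ) (vv : Fin c → ℝ),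
      (A *ᵥ xv + uv • Bu + Bv *ᵥ vv) ⬝ᵥ Q *ᵥ (A *ᵥ xv + uv • Bu + Bv *ᵥ vv)
        - ρ ^ 2 * (xv ⬝ᵥ Q *ᵥ xv)
        + quadM0 m L (Cy ⬝ᵥ xv + Dyu * uv + Dyv ⬝ᵥ vv) uv
        + (σ ^ 2 - 1) * ((Cz *ᵥ xv + uv • Dzu + Dzv *ᵥ vv) ⬝ᵥ
            R *ᵥ (Cz *ᵥ xv + uv • Dzu + Dzv *ᵥ vv))
        + 2 * ((Cz *ᵥ xv + uv • Dzu + Dzv *ᵥ vv) ⬝ᵥ R *ᵥ vv)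
        - vv ⬝ᵥ R *ᵥ vv ≤ 0)
    (hx : ∀ i, e' i = A *ᵥ e i + eu i • Bu + Bv *ᵥ ev i)
    (hy : ∀ i, ey i = Cy ⬝ᵥ e i + Dyu * eu i + Dyv ⬝ᵥ ev i)
    (hz : ∀ i, ez i = Cz *ᵥ e i + eu i • Dzu + Dzv *ᵥ ev i)
    (hv : ∀ i, ev i = ∑ j, Lap i j • ez j)
    (hF : ∑ i, (Fx *ᵥ e i + eu i • Fu) = 0)
    (hsec : ∀ i, 0 ≤ quadM0 m L (ey i) (eu i)) :
    (fun p : Fin n × Fin ν => e' p.1 p.2) ⬝ᵥ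
        (projOnes n ⊗ₖ P + (1 - projOnes n) ⊗ₖ Q) *ᵥ (fun p => e' p.1 p.2)
      ≤ ρ ^ 2 * ((fun p : Fin n × Fin ν => e p.1 p.2) ⬝ᵥ
        (projOnes n ⊗ₖ P + (1 - projOnes n) ⊗ₖ Q) *ᵥ (fun p => e p.1 p.2)) := by
  have hv0 := expect_eq_zero_of_vecMul_one hcol hv
  have hmean := lmi1_at_mean hLMI1 hx hy hF hv0
  have hbalance := sum_nonpos (s := univ) fun i _ =>
    lmi2_at_balance (isHermitian_iff_isSymm.mp hR.isHermitian) hLMI2 hx hy hz hv0 i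
  have hgraph := sum_balance_sub_quadForm_le hR hrow hσ hv
  have hsector := sum_nonneg (s := univ) fun i _ => hsec i
  rw [sum_quadM0_eq_mean_add_balance, Fintype.card_fin] at hsector
  simp only [sum_add_distrib, sum_sub_distrib, ← mul_sum] at hbalance
  rw [lyapunov_eq_mean_add_balance, lyapunov_eq_mean_add_balance]
  have hn : (0 : ℝ) ≤ n := n.cast_nonneg
  nlinarith [mul_nonpos_of_nonneg_of_nonpos hn hmean]

end ErrorSystem

theorem stmt_9_general
    (ν c r n sdim : ℕ) (m L σ ρ : ℝ)
    (A : Matrix (Fin ν) (Fin ν) ℝ) (Bu : Fin ν → ℝ) (Bv : Matrix (Fin ν) (Fin c) ℝ)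
    (Cy : Fin ν → ℝ) (Dyu : ℝ) (Dyv : Fin c → ℝ)
    (Cz : Matrix (Fin c) (Fin ν) ℝ) (Dzu : Fin c → ℝ) (Dzv : Matrix (Fin c) (Fin c) ℝ)
    (Fx : Matrix (Fin r) (Fin ν) ℝ) (Fu : Fin r → ℝ)
    -- gradient maps: sector bound with parameters (m, L) and optimizer yopt
    (g : Fin n → ℝ → ℝ) (yopt : ℝ)
    (hsec : ∀ i y, (g i y - g i yopt - m * (y - yopt)) *
      (g i y - g i yopt - L * (y - yopt)) ≤ 0)
    -- graph assumptions with parameter σ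
    (Lap : ℕ → Matrix (Fin n) (Fin n) ℝ)
    (hL1 : ∀ k, (Lap k).mulVec (fun _ => (1 : ℝ)) = 0)
    (hL2 : ∀ k, Matrix.vecMul (fun _ => (1 : ℝ)) (Lap k) = 0)
    (hL4 : ∀ k (φ : Fin n → ℝ),
      enorm2 ((1 - projOnes n - Lap k).mulVec φ) ≤ σ * enorm2 φ)
    -- trajectory of the algorithm
    (x : ℕ → Fin n → Fin ν → ℝ) (y u : ℕ → Fin n → ℝ) (z v : ℕ → Fin n → Fin c → ℝ)
    (htraj1 : ∀ k i, x (k+1) i = A.mulVec (x k i) + u k i • Bu + Bv.mulVec (v k i))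
    (htraj2 : ∀ k i, y k i = Cy ⬝ᵥ x k i + Dyu * u k i + Dyv ⬝ᵥ v k i)
    (htraj3 : ∀ k i, z k i = Cz.mulVec (x k i) + u k i • Dzu + Dzv.mulVec (v k i))
    (htraj4 : ∀ k i, u k i = g i (y k i))
    (htraj5 : ∀ k i, v k i = ∑ j, Lap k i j • z k j)
    (htraj6 : ∀ k, ∑ j, (Fx.mulVec (x k j) + u k j • Fu) = 0)
    -- fixed point satisfying the fixed-point conditions, with y*ᵢ = yopt
    (xstar : Fin n → Fin ν → ℝ) (ystar ustar : Fin n → ℝ)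
    (zstar vstar : Fin n → Fin c → ℝ)
    (hstar1 : ∀ i, xstar i = A.mulVec (xstar i) + ustar i • Bu + Bv.mulVec (vstar i))
    (hstar2 : ∀ i, ystar i = Cy ⬝ᵥ xstar i + Dyu * ustar i + Dyv ⬝ᵥ vstar i)
    (hstar3 : ∀ i, zstar i = Cz.mulVec (xstar i) + ustar i • Dzu + Dzv.mulVec (vstar i))
    (hstar4 : ∀ i, ustar i = g i (ystar i))
    (hstar6 : (∑ j, (Fx.mulVec (xstar j) + ustar j • Fu)) = 0)
    (hcons_z : ∀ i j, zstar i = zstar j) (hrob_v : ∀ i, vstar i = 0)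
    (hyopt : ∀ i, ystar i = yopt)
    -- Ψ: columns form a basis of the nullspace of [Fx Fu]
    (Ψx : Matrix (Fin ν) (Fin sdim) ℝ) (Ψu : Fin sdim → ℝ)
    (hΨ2 : ∀ (xv : Fin ν → ℝ) (uv : ℝ), Fx.mulVec xv + uv • Fu = 0 →
      ∃ s : Fin sdim → ℝ, Ψx.mulVec s = xv ∧ Ψu ⬝ᵥ s = uv)
    -- SDP solution: P ≻ 0, Q ≻ 0, R ⪰ 0 satisfying (LMI-1) and (LMI-2)
    (P Q : Matrix (Fin ν) (Fin ν) ℝ) (R : Matrix (Fin c) (Fin c) ℝ)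
    (hR : R.PosSemidef)
    (hLMI1 : ∀ s : Fin sdim → ℝ,
      (A.mulVec (Ψx.mulVec s) + (Ψu ⬝ᵥ s) • Bu) ⬝ᵥ
          P.mulVec (A.mulVec (Ψx.mulVec s) + (Ψu ⬝ᵥ s) • Bu)
        - ρ^2 * ((Ψx.mulVec s) ⬝ᵥ P.mulVec (Ψx.mulVec s))
        + quadM0 m L (Cy ⬝ᵥ (Ψx.mulVec s) + Dyu * (Ψu ⬝ᵥ s)) (Ψu ⬝ᵥ s) ≤ 0)
    (hLMI2 : ∀ (xv : Fin ν → ℝ) (uv : ℝ) (vv : Fin c → ℝ),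
      (A.mulVec xv + uv • Bu + Bv.mulVec vv) ⬝ᵥ
          Q.mulVec (A.mulVec xv + uv • Bu + Bv.mulVec vv)
        - ρ^2 * (xv ⬝ᵥ Q.mulVec xv)
        + quadM0 m L (Cy ⬝ᵥ xv + Dyu * uv + Dyv ⬝ᵥ vv) uv
        + (σ^2 - 1) * ((Cz.mulVec xv + uv • Dzu + Dzv.mulVec vv) ⬝ᵥ
            R.mulVec (Cz.mulVec xv + uv • Dzu + Dzv.mulVec vv))
        + 2 * ((Cz.mulVec xv + uv • Dzu + Dzv.mulVec vv) ⬝ᵥ R.mulVec vv)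
        - vv ⬝ᵥ R.mulVec vv ≤ 0) :
    ∀ k : ℕ,
      (fun p : Fin n × Fin ν => x (k+1) p.1 p.2 - xstar p.1 p.2) ⬝ᵥ
          (projOnes n ⊗ₖ P + (1 - projOnes n) ⊗ₖ Q).mulVec
          (fun p : Fin n × Fin ν => x (k+1) p.1 p.2 - xstar p.1 p.2)
      ≤ ρ^2 *
        ((fun p : Fin n × Fin ν => x k p.1 p.2 - xstar p.1 p.2) ⬝ᵥ
          (projOnes n ⊗ₖ P + (1 - projOnes n) ⊗ₖ Q).mulVec
          (fun p : Fin n × Fin ν => x k p.1 p.2 - xstar p.1 p.2)) := by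
  intro k
  have hLMI1' : ∀ (xv : Fin ν → ℝ) (uv : ℝ), Fx *ᵥ xv + uv • Fu = 0 →
      (A *ᵥ xv + uv • Bu) ⬝ᵥ P *ᵥ (A *ᵥ xv + uv • Bu) - ρ ^ 2 * (xv ⬝ᵥ P *ᵥ xv)
        + quadM0 m L (Cy ⬝ᵥ xv + Dyu * uv) uv ≤ 0 := by
    intro xv uv hxu
    obtain ⟨s, rfl, rfl⟩ := hΨ2 xv uv hxu
    exact hLMI1 s
  refine lyapunov_decrease_of_error_system (e := fun i => x k i - xstar i)
    (e' := fun i => x (k + 1) i - xstar i)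
    (eu := fun i => u k i - ustar i) (ey := fun i => y k i - ystar i)
    (ez := fun i => z k i - zstar i) (ev := v k) hR (hL1 k) (hL2 k) (hL4 k) hLMI1' hLMI2
    (fun i => ?_) (fun i => ?_) (fun i => ?_) (fun i => ?_) ?_ (fun i => ?_)
  · rw [htraj1, mulVec_sub, sub_smul]
    conv_lhs => rw [hstar1 i, hrob_v, mulVec_zero, add_zero]
    abel
  · rw [htraj2, dotProduct_sub]
    conv_lhs => rw [hstar2 i, hrob_v, dotProduct_zero, add_zero]
    ring
  · rw [htraj3, mulVec_sub, sub_smul]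
    conv_lhs => rw [hstar3 i, hrob_v, mulVec_zero, add_zero]
    abel
  · simp only [hcons_z _ i, sum_smul_sub_const_of_mulVec_one (hL1 k), htraj5]
  · simp only [mulVec_sub, sub_smul, sub_add_sub_comm, sum_sub_distrib, htraj6, hstar6, sub_zero]
  · rw [quadM0_eq_neg_two_mul, htraj4, hstar4, hyopt]
    nlinarith [hsec i (y k i)]

/-- Lyapunov decrease: under the hypotheses of the main analysis result, the Lyapunov
function `V^k = (x̃^k)ᵀ (Π ⊗ P + (I−Π) ⊗ Q) x̃^k` satisfies `V^{k+1} ≤ ρ² V^k`. -/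
theorem stmt_9
    (ν c r n sdim : ℕ) (m L σ ρ : ℝ)
    (hm : 0 < m) (hmL : m ≤ L) (hσ0 : 0 ≤ σ) (hσ1 : σ < 1) (hρ : 0 ≤ ρ)
    (A : Matrix (Fin ν) (Fin ν) ℝ) (Bu : Fin ν → ℝ) (Bv : Matrix (Fin ν) (Fin c) ℝ)
    (Cy : Fin ν → ℝ) (Dyu : ℝ) (Dyv : Fin c → ℝ)
    (Cz : Matrix (Fin c) (Fin ν) ℝ) (Dzu : Fin c → ℝ) (Dzv : Matrix (Fin c) (Fin c) ℝ)
    (Fx : Matrix (Fin r) (Fin ν) ℝ) (Fu : Fin r → ℝ)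
    -- gradient maps: sector bound with parameters (m, L) and optimizer yopt
    (g : Fin n → ℝ → ℝ) (yopt : ℝ)
    (hsec : ∀ i y, (g i y - g i yopt - m * (y - yopt)) *
      (g i y - g i yopt - L * (y - yopt)) ≤ 0)
    (hopt : ∑ i, g i yopt = 0)
    -- graph assumptions with parameter σ
    (Lap : ℕ → Matrix (Fin n) (Fin n) ℝ)
    (hL1 : ∀ k, (Lap k).mulVec (fun _ => (1 : ℝ)) = 0)
    (hL2 : ∀ k, Matrix.vecMul (fun _ => (1 : ℝ)) (Lap k) = 0)
    (hL4 : ∀ k (φ : Fin n → ℝ),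
      enorm2 ((1 - projOnes n - Lap k).mulVec φ) ≤ σ * enorm2 φ)
    -- trajectory of the algorithm
    (x : ℕ → Fin n → Fin ν → ℝ) (y u : ℕ → Fin n → ℝ) (z v : ℕ → Fin n → Fin c → ℝ)
    (htraj1 : ∀ k i, x (k+1) i = A.mulVec (x k i) + u k i • Bu + Bv.mulVec (v k i))
    (htraj2 : ∀ k i, y k i = Cy ⬝ᵥ x k i + Dyu * u k i + Dyv ⬝ᵥ v k i)
    (htraj3 : ∀ k i, z k i = Cz.mulVec (x k i) + u k i • Dzu + Dzv.mulVec (v k i))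
    (htraj4 : ∀ k i, u k i = g i (y k i))
    (htraj5 : ∀ k i, v k i = ∑ j, Lap k i j • z k j)
    (htraj6 : ∀ k, ∑ j, (Fx.mulVec (x k j) + u k j • Fu) = 0)
    -- fixed point satisfying the fixed-point conditions, with y*ᵢ = yopt
    (xstar : Fin n → Fin ν → ℝ) (ystar ustar : Fin n → ℝ)
    (zstar vstar : Fin n → Fin c → ℝ)
    (hstar1 : ∀ i, xstar i = A.mulVec (xstar i) + ustar i • Bu + Bv.mulVec (vstar i))
    (hstar2 : ∀ i, ystar i = Cy ⬝ᵥ xstar i + Dyu * ustar i + Dyv ⬝ᵥ vstar i)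
    (hstar3 : ∀ i, zstar i = Cz.mulVec (xstar i) + ustar i • Dzu + Dzv.mulVec (vstar i))
    (hstar4 : ∀ i, ustar i = g i (ystar i))
    (hstar6 : (∑ j, (Fx.mulVec (xstar j) + ustar j • Fu)) = 0)
    (hcons_y : ∀ i j, ystar i = ystar j) (hopt_u : ∑ i, ustar i = 0)
    (hcons_z : ∀ i j, zstar i = zstar j) (hrob_v : ∀ i, vstar i = 0)
    (hyopt : ∀ i, ystar i = yopt)
    -- Ψ: columns form a basis of the nullspace of [Fx Fu]
    (Ψx : Matrix (Fin ν) (Fin sdim) ℝ) (Ψu : Fin sdim → ℝ)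
    (hΨ1 : ∀ s : Fin sdim → ℝ, Fx.mulVec (Ψx.mulVec s) + (Ψu ⬝ᵥ s) • Fu = 0)
    (hΨ2 : ∀ (xv : Fin ν → ℝ) (uv : ℝ), Fx.mulVec xv + uv • Fu = 0 →
      ∃ s : Fin sdim → ℝ, Ψx.mulVec s = xv ∧ Ψu ⬝ᵥ s = uv)
    (hΨ3 : ∀ s : Fin sdim → ℝ, Ψx.mulVec s = 0 → Ψu ⬝ᵥ s = 0 → s = 0)
    -- SDP solution: P ≻ 0, Q ≻ 0, R ⪰ 0 satisfying (LMI-1) and (LMI-2)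
    (P Q : Matrix (Fin ν) (Fin ν) ℝ) (R : Matrix (Fin c) (Fin c) ℝ)
    (hP : P.PosDef) (hQ : Q.PosDef) (hR : R.PosSemidef)
    (hLMI1 : ∀ s : Fin sdim → ℝ,
      (A.mulVec (Ψx.mulVec s) + (Ψu ⬝ᵥ s) • Bu) ⬝ᵥ
          P.mulVec (A.mulVec (Ψx.mulVec s) + (Ψu ⬝ᵥ s) • Bu)
        - ρ^2 * ((Ψx.mulVec s) ⬝ᵥ P.mulVec (Ψx.mulVec s))
        + quadM0 m L (Cy ⬝ᵥ (Ψx.mulVec s) + Dyu * (Ψu ⬝ᵥ s)) (Ψu ⬝ᵥ s) ≤ 0)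
    (hLMI2 : ∀ (xv : Fin ν → ℝ) (uv : ℝ) (vv : Fin c → ℝ),
      (A.mulVec xv + uv • Bu + Bv.mulVec vv) ⬝ᵥ
          Q.mulVec (A.mulVec xv + uv • Bu + Bv.mulVec vv)
        - ρ^2 * (xv ⬝ᵥ Q.mulVec xv)
        + quadM0 m L (Cy ⬝ᵥ xv + Dyu * uv + Dyv ⬝ᵥ vv) uv
        + (σ^2 - 1) * ((Cz.mulVec xv + uv • Dzu + Dzv.mulVec vv) ⬝ᵥ
            R.mulVec (Cz.mulVec xv + uv • Dzu + Dzv.mulVec vv))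
        + 2 * ((Cz.mulVec xv + uv • Dzu + Dzv.mulVec vv) ⬝ᵥ R.mulVec vv)
        - vv ⬝ᵥ R.mulVec vv ≤ 0) :
    ∀ k : ℕ,
      (fun p : Fin n × Fin ν => x (k+1) p.1 p.2 - xstar p.1 p.2) ⬝ᵥ
          (projOnes n ⊗ₖ P + (1 - projOnes n) ⊗ₖ Q).mulVec
          (fun p : Fin n × Fin ν => x (k+1) p.1 p.2 - xstar p.1 p.2)
      ≤ ρ^2 *
        ((fun p : Fin n × Fin ν => x k p.1 p.2 - xstar p.1 p.2) ⬝ᵥ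
          (projOnes n ⊗ₖ P + (1 - projOnes n) ⊗ₖ Q).mulVec
          (fun p : Fin n × Fin ν => x k p.1 p.2 - xstar p.1 p.2)) :=
  stmt_9_general ν c r n sdim m L σ ρ A Bu Bv Cy Dyu Dyv Cz Dzu Dzv Fx Fu g yopt hsec Lap hL1 hL2
    hL4 x y u z v htraj1 htraj2 htraj3 htraj4 htraj5 htraj6 xstar ystar ustar zstar vstar hstar1
    hstar2 hstar3 hstar4 hstar6 hcons_z hrob_v hyopt Ψx Ψu hΨ2 P Q R hR hLMI1 hLMI2
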